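/- Characterization of F_γ: a Dyck word d (of length 2n, n ≥ 1) satisfies d·b ∈ F_γ if and only if (1) d is symmetric, i.e., Sym(d) = d, and (2) d·b is uniquely decomposable into two palindromes, i.e., there is exactly one pair (π₁, π₂) of palindromes with d·b = π₁·π₂. -/

import Mathlib

/-- The two-letter alphabet {a, b}. -/
inductive Letter : Type
  | a : Letter
  | b : Letter
deriving DecidableEq, BEq, Repr

/-- Words over the alphabet {a, b}. -/
abbrev Word := List Letter

/-- δ(w) = |w|_a − |w|_b. -/
def delta (w : Word) : ℤ := (w.count Letter.a : ℤ) - (w.count Letter.b : ℤ)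

/-- A Dyck word: δ(w) = 0 and δ(p) ≥ 0 for every prefix p of w. -/
def IsDyck (w : Word) : Prop := delta w = 0 ∧ ∀ p : Word, p <+: w → 0 ≤ delta p

/-- Membership in D_n: w = d·b with d a Dyck word of length 2n. -/
def InD (n : ℕ) (w : Word) : Prop :=
  ∃ d : Word, IsDyck d ∧ d.length = 2 * n ∧ w = d ++ [Letter.b]

/-- Exchanging the letters a and b. -/
def Letter.flip : Letter → Letter
  | .a => .b
  | .b => .a

/-- The complement w̄ of a word w. -/
def comp (w : Word) : Word := w.map Letter.flip

/-- Sym(w): the complement of the mirror (reversal) of w. -/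
def sym (w : Word) : Word := comp w.reverse

/-- A palindrome: a word equal to its mirror. -/
def Palindrome (w : Word) : Prop := w.reverse = w

/-- w' is a conjugate of w: w = u·v and w' = v·u. -/
def Conj (w w' : Word) : Prop := ∃ u v : Word, w = u ++ v ∧ w' = v ++ u

/-- u is the principal prefix of w: the shortest prefix of w with δ(u) maximal. -/
def IsPrincipalPrefix (u w : Word) : Prop :=
  u <+: w ∧ (∀ p : Word, p <+: w → delta p ≤ delta u) ∧
    (∀ p : Word, p <+: w → delta p = delta u → u.length ≤ p.length)

/-- The graph of the map γ: writing w = u·v·b with u the principal prefix of w,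
    γ(w) = v̄·b·ū. -/
def GammaRel (w w' : Word) : Prop :=
  ∃ u v : Word, IsPrincipalPrefix u w ∧ w = u ++ v ++ [Letter.b] ∧
    w' = comp v ++ [Letter.b] ++ comp u

/-- F_n: the fixed points of γ in D_n. -/
def InF (n : ℕ) (w : Word) : Prop := InD n w ∧ GammaRel w w

/-- F_γ = ⋃_{n ≥ 1} F_n. -/
def InFgamma (w : Word) : Prop := ∃ n : ℕ, 1 ≤ n ∧ InF n w

/-- x^y: concatenation of the word x with itself y times. -/
def wpow (x : Word) : ℕ → Word
  | 0 => []
  | k + 1 => x ++ wpow x k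

/-!
Write `w = d·b = u·v·b` and `L = |w| = 2n + 1`. The fixed-point equation `u·v·b = v̄·b·ū` says that,
read cyclically, `w[x + |u|] = w̄[x]` at every position but one, where the flip fails and both
letters are `b`. Following the forced alternation of letters along the orbit of the last letter
under `x ↦ x + |u|` shows that `|u|` is a unit of `ZMod L` (`L` is odd), so the equation determines
`w` from its last letter. The reflection `x ↦ -2 - |u| - x` preserves the equation, so it preserves
`w`: this is the palindromic factorization `w = v̄ · (b·ū)`, from which `Sym(d) = d` follows. Any
palindromic cut `j` reflects the last letter onto position `j`, so `w[j] = b`; unless `j` is the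
defect, `w[j + |u|] = a` would then be reflected onto the defect, where the letter is `b`.
Conversely, from `Sym(d) = d` and `w = π₁·π₂` one reads off `u = Sym(π₂')` and `v = π̄₁`, where
`π₂ = π₂'·b`, and the Dyck condition makes `u` the principal prefix.
-/

namespace Letter

@[simp] lemma flip_flip (c : Letter) : c.flip.flip = c := by cases c <;> rfl

lemma flip_involutive : Function.Involutive Letter.flip := flip_flip

lemma flip_ne_self (c : Letter) : c.flip ≠ c := by cases c <;> decide

end Letter

@[simp] lemma length_comp (w : Word) : (comp w).length = w.length := List.length_map _

@[simp] lemma comp_append (x y : Word) : comp (x ++ y) = comp x ++ comp y := List.map_append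

@[simp] lemma comp_cons (c : Letter) (w : Word) : comp (c :: w) = c.flip :: comp w := rfl

@[simp] lemma comp_comp (w : Word) : comp (comp w) = w := by
  simp [comp, Letter.flip_involutive.comp_self]

lemma comp_reverse (w : Word) : comp w.reverse = (comp w).reverse := List.map_reverse ..

lemma delta_append (x y : Word) : delta (x ++ y) = delta x + delta y := by
  simp only [delta, List.count_append]; push_cast; ring

lemma delta_comp (w : Word) : delta (comp w) = -delta w := by
  induction w with
  | nil => rfl
  | cons c w ih =>
    have hc : delta [c.flip] = -delta [c] := by cases c <;> rfl
    have hcons (c : Letter) (w : Word) : delta (c :: w) = delta [c] + delta w :=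
      delta_append [c] w
    rw [comp_cons, hcons c.flip, hcons c, ih, hc, neg_add]

theorem List.IsPrefix.of_concat_of_length_le {α : Type*} {q l : List α} {c : α}
    (h : q <+: l ++ [c]) (hq : q.length ≤ l.length) : q <+: l := by
  rcases List.prefix_concat_iff.1 h with rfl | h
  · simp at hq
  · exact h

namespace IsDyck

variable {d : Word}

theorem not_palindrome_append_b (hd : IsDyck d) (hne : d ≠ []) :
    ¬ Palindrome (d ++ [.b]) := by
  obtain ⟨c, d', rfl⟩ := List.exists_cons_of_ne_nil hne
  intro h
  obtain rfl : c = .b := by simpa [Palindrome] using (congrArg List.head? h).symm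
  exact absurd (hd.2 [.b] ⟨d', rfl⟩) (by decide)

theorem isPrincipalPrefix {u v : Word} (hd : IsDyck d)
    (h₁ : d ++ [.b] = u ++ v ++ [.b]) (h₂ : d ++ [.b] = comp v ++ [.b] ++ comp u) :
    IsPrincipalPrefix u (d ++ [.b]) := by
  have hduv : d = u ++ v := List.append_cancel_right h₁
  have hδ : delta u + delta v = 0 := by rw [← delta_append, ← hduv, hd.1]
  have hlen : d.length = u.length + v.length := by rw [hduv, List.length_append]
  have hnonneg (q : Word) (hq : q <+: d ++ [.b]) (hl : q.length ≤ d.length) : 0 ≤ delta q :=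
    hd.2 q (hq.of_concat_of_length_le hl)
  have hu : u <+: d ++ [.b] := ⟨v ++ [.b], by rw [h₁, List.append_assoc]⟩
  have hδb : delta [.b] = -1 := rfl
  have hlong (x : Word) (hx : x <+: v ++ [.b]) : delta (u ++ x) ≤ delta u := by
    rcases List.prefix_concat_iff.1 hx with rfl | hx
    · rw [← List.append_assoc, ← h₁, delta_append, hd.1, hδb]
      linarith [hnonneg u hu (by omega)]
    · have hcx : comp x <+: d ++ [.b] := by
        rw [h₂, List.append_assoc]
        exact (hx.map Letter.flip).trans (List.prefix_append _ _)
      have := hnonneg _ hcx (by simp; have := hx.length_le; omega)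
      rw [delta_comp] at this
      linarith [delta_append u x]
  have hshort (q : Word) (hq : q <+: u) (hl : q.length < u.length) : delta q < delta u := by
    have hpre : comp v ++ [.b] ++ comp q <+: d ++ [.b] :=
      h₂ ▸ (List.prefix_append_right_inj _).2 (hq.map Letter.flip)
    have := hnonneg _ hpre (by simp; omega)
    rw [delta_append, delta_append, delta_comp, delta_comp, hδb] at this
    linarith
  refine ⟨hu, fun q hq => ?_, fun q hq heq => ?_⟩
  · rcases le_or_gt u.length q.length with hl | hl
    · obtain ⟨x, rfl⟩ := List.prefix_of_prefix_length_le hu hq hl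
      exact hlong x ((List.prefix_append_right_inj u).1 (by rwa [← List.append_assoc, ← h₁]))
    · exact (hshort q (List.prefix_of_prefix_length_le hq hu hl.le) hl).le
  · by_contra hl
    have hl := not_le.1 hl
    exact (hshort q (List.prefix_of_prefix_length_le hq hu hl.le) hl).ne heq

end IsDyck

section Cyclic

variable {L : ℕ}

def cyclicGet (w : Word) (x : ZMod L) : Letter := w.getD x.val .a

lemma cyclicGet_natCast (w : Word) {k : ℕ} (hk : k < L) :
    cyclicGet w (k : ZMod L) = w.getD k .a := by
  rw [cyclicGet, ZMod.val_cast_of_lt hk]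

lemma eq_of_cyclicGet_eq [NeZero L] {w₁ w₂ : Word} (h₁ : w₁.length = L) (h₂ : w₂.length = L)
    (h : ∀ x : ZMod L, cyclicGet w₁ x = cyclicGet w₂ x) : w₁ = w₂ := by
  refine List.ext_getElem (h₁.trans h₂.symm) fun k hk₁ hk₂ => ?_
  have := h k
  rwa [cyclicGet_natCast _ (h₁ ▸ hk₁), cyclicGet_natCast _ (h₁ ▸ hk₁),
    List.getD_eq_getElem _ _ hk₁, List.getD_eq_getElem _ _ hk₂] at this

lemma cyclicGet_reverse [NeZero L] {w : Word} (hw : w.length = L) (x : ZMod L) :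
    cyclicGet w.reverse x = cyclicGet w (-1 - x) := by
  have hx := ZMod.val_lt x
  have hcast : -1 - x = ((L - 1 - x.val : ℕ) : ZMod L) := by
    rw [Nat.cast_sub (by omega), Nat.cast_sub (by omega), ZMod.natCast_self,
      ZMod.natCast_zmod_val]
    ring
  rw [hcast, cyclicGet_natCast _ (by omega), cyclicGet, List.getD_eq_getElem?_getD,
    List.getElem?_reverse (by omega), List.getD_eq_getElem?_getD, hw]

lemma cyclicGet_rotate [NeZero L] {w : Word} (hw : w.length = L) (i : ℕ) (x : ZMod L) :
    cyclicGet (w.rotate i) x = cyclicGet w (x + (i : ZMod L)) := by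
  have hcast : x + (i : ZMod L) = (((x.val + i) % L : ℕ) : ZMod L) := by
    rw [ZMod.natCast_mod, Nat.cast_add, ZMod.natCast_zmod_val]
  have hx : x.val < (w.rotate i).length := by simpa [hw] using ZMod.val_lt x
  rw [hcast, cyclicGet_natCast _ (Nat.mod_lt _ (NeZero.pos L)), cyclicGet,
    List.getD_eq_getElem _ _ hx, List.getElem_rotate, List.getD_eq_getElem _ _ (by
      simpa [hw] using Nat.mod_lt _ (NeZero.pos L))]
  simp only [hw]

lemma cyclicGet_comp [NeZero L] {w : Word} (hw : w.length = L) (x : ZMod L) :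
    cyclicGet (comp w) x = (cyclicGet w x).flip := by
  have hx : x.val < w.length := hw ▸ ZMod.val_lt x
  rw [cyclicGet, cyclicGet, List.getD_eq_getElem _ _ (by simpa using hx),
    List.getD_eq_getElem _ _ hx]
  simp [comp]

lemma cyclicGet_append_cons (A B : Word) (c : Letter) (hA : A.length < L) :
    cyclicGet (A ++ c :: B) (A.length : ZMod L) = c := by
  simp [cyclicGet_natCast _ hA]

lemma cyclicGet_append_cons_of_ne [NeZero L] (A B : Word) (c c' : Letter) {x : ZMod L}
    (hx : x ≠ A.length) : cyclicGet (A ++ c :: B) x = cyclicGet (A ++ c' :: B) x := by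
  have hval : x.val ≠ A.length := fun h => hx (by rw [← h, ZMod.natCast_zmod_val])
  simp only [cyclicGet, List.getD_eq_getElem?_getD]
  rcases lt_or_gt_of_ne hval with h | h
  · rw [List.getElem?_append_left h, List.getElem?_append_left h]
  · obtain ⟨k, hk⟩ : ∃ k, x.val - A.length = k + 1 :=
      ⟨_, (Nat.succ_pred_eq_of_pos (by omega)).symm⟩
    rw [List.getElem?_append_right h.le, List.getElem?_append_right h.le, hk]
    rfl

end Cyclic

/-- For `w = u·v·b = v̄·b·ū` read cyclically (`f = cyclicGet w`, `p = |u|`), the flip fails only at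
position `-1 - p = |v|`. -/
structure IsFlipShift {L : ℕ} (f : ZMod L → Letter) (p : ZMod L) : Prop where
  apply_neg_one : f (-1) = .b
  apply_neg_one_sub : f (-1 - p) = .b
  apply_add : ∀ x, x ≠ -1 - p → f (x + p) = (f x).flip

namespace IsFlipShift

variable {L : ℕ} {f g : ZMod L → Letter} {p : ZMod L}

lemma apply_add_mul (h : IsFlipShift f p) (x : ZMod L) {k : ℕ}
    (hk : ∀ m < k, x + m * p ≠ -1 - p) : f (x + k * p) = Letter.flip^[k] (f x) := by
  induction k with
  | zero => simp
  | succ k ih =>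
    rw [Function.iterate_succ_apply', ← ih fun m hm => hk m (by omega),
      ← h.apply_add _ (hk k (by omega))]
    congr 1
    push_cast
    ring

lemma isUnit (h : IsFlipShift f p) (hL : Odd L) : IsUnit p := by
  by_contra hp
  have hk : ∀ m < L, (0 : ZMod L) + m * p ≠ -1 - p := fun m _ hm =>
    hp (IsUnit.of_mul_eq_one (-(m + 1 : ZMod L)) (by linear_combination -hm))
  have := h.apply_add_mul 0 hk
  rw [ZMod.natCast_self, zero_mul, add_zero, Letter.flip_involutive.iterate_odd hL] at this
  exact Letter.flip_ne_self _ this.symm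

lemma apply_eq_iterate [NeZero L] (h : IsFlipShift f p) (hL : Odd L) (x : ZMod L) :
    f x = Letter.flip^[((x + 1) * p⁻¹).val] .b := by
  have hp := ZMod.mul_inv_of_unit p (h.isUnit hL)
  have ht := ZMod.val_lt ((x + 1) * p⁻¹)
  have hx : x = -1 + (((x + 1) * p⁻¹).val : ℕ) * p := by
    rw [ZMod.natCast_zmod_val]
    linear_combination -(x + 1) * hp
  conv_lhs => rw [hx]
  rw [h.apply_add_mul, h.apply_neg_one]
  intro m hm heq
  have hm0 : ((m + 1 : ℕ) : ZMod L) = 0 := by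
    push_cast
    linear_combination p⁻¹ * heq - (m + 1) * hp
  have := Nat.le_of_dvd (by omega) ((ZMod.natCast_eq_zero_iff _ _).1 hm0)
  omega

lemma unique [NeZero L] (hf : IsFlipShift f p) (hg : IsFlipShift g p) (hL : Odd L) : f = g :=
  funext fun x => by rw [hf.apply_eq_iterate hL, hg.apply_eq_iterate hL]

lemma reflect (h : IsFlipShift f p) : IsFlipShift (fun x => f (-2 - p - x)) p where
  apply_neg_one := by
    rw [show (-2 - p - -1 : ZMod L) = -1 - p by ring]
    exact h.apply_neg_one_sub
  apply_neg_one_sub := by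
    rw [show (-2 - p - (-1 - p) : ZMod L) = -1 by ring]
    exact h.apply_neg_one
  apply_add x hx := by
    have := h.apply_add (-2 - p - (x + p)) fun h' => hx (by linear_combination -h')
    rw [show -2 - p - (x + p) + p = -2 - p - x by ring] at this
    rw [this, Letter.flip_flip]

lemma apply_sub_one_sub [NeZero L] (h : IsFlipShift f p) (hL : Odd L) (x : ZMod L) :
    f (x - 1 - p) = f (-1 - x) := by
  have := congrFun (h.reflect.unique h hL) (-1 - x)
  rwa [show -2 - p - (-1 - x) = x - 1 - p by ring] at this

lemma eq_neg_one_sub_of_apply_add (h : IsFlipShift f p) {j : ZMod L}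
    (hj : ∀ x, f (x + j) = f (-1 - x)) : j = -1 - p := by
  by_contra hne
  have hfj : f j = .b := by simpa [h.apply_neg_one] using hj 0
  have := hj p
  rw [add_comm, h.apply_add j hne, hfj, h.apply_neg_one_sub] at this
  exact absurd this (by decide)

end IsFlipShift

lemma natCast_length_eq_neg_one_sub {L : ℕ} {w u v : Word} (hw : w.length = L)
    (h₁ : w = u ++ v ++ [.b]) : (v.length : ZMod L) = -1 - u.length := by
  have hlen : ((u.length + v.length + 1 : ℕ) : ZMod L) = 0 := by
    rw [show u.length + v.length + 1 = L by rw [← hw, h₁]; simp; ring, ZMod.natCast_self]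
  push_cast at hlen
  linear_combination hlen

lemma isFlipShift_cyclicGet {L : ℕ} [NeZero L] {w u v : Word} (hw : w.length = L)
    (h₁ : w = u ++ v ++ [.b]) (h₂ : w = comp v ++ [.b] ++ comp u) :
    IsFlipShift (cyclicGet w) (u.length : ZMod L) := by
  have hv := natCast_length_eq_neg_one_sub hw h₁
  have hL : u.length + v.length + 1 = L := by rw [← hw, h₁]; simp; ring
  have h₂' : w = comp v ++ .b :: comp u := by simpa using h₂
  refine ⟨?_, ?_, fun x hx => ?_⟩
  · have : (-1 : ZMod L) = ((u ++ v).length : ZMod L) := by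
      rw [List.length_append, Nat.cast_add, hv]; ring
    rw [this, h₁]
    exact cyclicGet_append_cons _ _ _ (by simp; omega)
  · rw [← hv, h₂']
    simpa using cyclicGet_append_cons (comp v) (comp u) .b (by simp; omega)
  · have hrot : w.rotate u.length = v ++ .b :: u := by
      rw [h₁, List.append_assoc, List.rotate_append_length_eq]; simp
    rw [← cyclicGet_rotate hw, hrot, cyclicGet_append_cons_of_ne v u .b .a (hv ▸ hx),
      ← cyclicGet_comp hw, h₂']
    simp [Letter.flip]

lemma palindrome_and_palindrome_iff (π₁ π₂ : Word) :
    Palindrome π₁ ∧ Palindrome π₂ ↔ (π₁ ++ π₂).reverse = (π₁ ++ π₂).rotate π₁.length := by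
  rw [List.rotate_append_length_eq, List.reverse_append]
  constructor
  · rintro ⟨h₁, h₂⟩
    rw [h₁, h₂]
  · intro h
    obtain ⟨h₂, h₁⟩ := List.append_inj h (by simp)
    exact ⟨h₁, h₂⟩

lemma palindrome_and_palindrome_iff_cyclicGet {L : ℕ} [NeZero L] {π₁ π₂ : Word}
    (hw : (π₁ ++ π₂).length = L) :
    Palindrome π₁ ∧ Palindrome π₂ ↔
      ∀ x : ZMod L,
        cyclicGet (π₁ ++ π₂) (x + (π₁.length : ZMod L)) = cyclicGet (π₁ ++ π₂) (-1 - x) := by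
  rw [palindrome_and_palindrome_iff]
  constructor
  · intro h x
    rw [← cyclicGet_rotate hw, ← h, cyclicGet_reverse hw]
  · intro h
    refine eq_of_cyclicGet_eq (by rw [List.length_reverse, hw]) (by rw [List.length_rotate, hw])
      fun x => ?_
    rw [cyclicGet_reverse hw, cyclicGet_rotate hw, h]

lemma ne_nil_of_not_palindrome_append {π₁ π₂ : Word} (h : ¬ Palindrome (π₁ ++ π₂))
    (hπ₁ : Palindrome π₁) : π₂ ≠ [] := by
  rintro rfl
  exact h (by simpa using hπ₁)

section GammaFixed

variable {w u v : Word}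

theorem palindrome_comp_of_eq (hw : Odd w.length) (h₁ : w = u ++ v ++ [.b])
    (h₂ : w = comp v ++ [.b] ++ comp u) :
    Palindrome (comp v) ∧ Palindrome (.b :: comp u) := by
  have : NeZero w.length := ⟨hw.pos.ne'⟩
  have h₂' : w = comp v ++ .b :: comp u := by simpa using h₂
  have hf := isFlipShift_cyclicGet rfl h₁ h₂
  rw [palindrome_and_palindrome_iff_cyclicGet (L := w.length) (by rw [← h₂']), ← h₂',
    length_comp, natCast_length_eq_neg_one_sub rfl h₁]
  intro x
  rw [← hf.apply_sub_one_sub hw x]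
  ring_nf

theorem eq_comp_of_palindrome_of_eq (hw : ¬ Palindrome w) (h₁ : w = u ++ v ++ [.b])
    (h₂ : w = comp v ++ [.b] ++ comp u) {π₁ π₂ : Word} (hπ₁ : Palindrome π₁)
    (hπ₂ : Palindrome π₂) (h : w = π₁ ++ π₂) : π₁ = comp v ∧ π₂ = .b :: comp u := by
  have hπ₂ne := ne_nil_of_not_palindrome_append (h ▸ hw) hπ₁
  have : NeZero w.length := ⟨by rw [h₁]; simp⟩
  have hcut := (palindrome_and_palindrome_iff_cyclicGet (L := w.length) (h ▸ rfl)).1 ⟨hπ₁, hπ₂⟩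
  rw [← h] at hcut
  have hj := (isFlipShift_cyclicGet rfl h₁ h₂).eq_neg_one_sub_of_apply_add hcut
  rw [← natCast_length_eq_neg_one_sub rfl h₁, ZMod.natCast_eq_natCast_iff',
    Nat.mod_eq_of_lt, Nat.mod_eq_of_lt] at hj
  · exact List.append_inj (h.symm.trans (by simpa using h₂)) (by simpa using hj)
  · rw [h₁]; simp; omega
  · rw [h]; simp; exact List.length_pos_iff.2 hπ₂ne

end GammaFixed

theorem sym_eq_self_of_palindrome {d u v : Word} (h₁ : d ++ [.b] = u ++ v ++ [.b])
    (h₂ : d ++ [.b] = comp v ++ [.b] ++ comp u) (hv : Palindrome (comp v))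
    (hu : Palindrome (.b :: comp u)) : sym d = d := by
  have hu' : (comp u).reverse ++ [.b] = .b :: comp u := by simpa [Palindrome] using hu
  refine List.append_cancel_right (bs := [Letter.b]) ?_
  rw [List.append_cancel_right h₁, sym, List.reverse_append, comp_append, comp_reverse,
    comp_reverse, hv, List.append_assoc, hu', ← h₁, h₂]
  simp

theorem exists_eq_of_sym_eq_self {d π₁ π₂ : Word} (hsym : sym d = d) (hπ₁ : Palindrome π₁)
    (hπ₂ : Palindrome π₂) (hne : π₂ ≠ []) (h : d ++ [.b] = π₁ ++ π₂) :
    ∃ u v, d ++ [.b] = u ++ v ++ [.b] ∧ d ++ [.b] = comp v ++ [.b] ++ comp u := by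
  obtain ⟨ρ, c, rfl⟩ := (List.eq_nil_or_concat' π₂).resolve_left hne
  obtain ⟨hd, hc⟩ := List.append_inj' (h.trans (List.append_assoc _ _ _).symm) rfl
  obtain rfl : c = .b := (List.singleton_inj.1 hc).symm
  refine ⟨comp ρ.reverse, comp π₁, ?_, ?_⟩
  · rw [← comp_append, ← hπ₁, ← List.reverse_append, ← hd, ← sym, hsym]
  · rw [comp_comp, comp_comp, h, List.append_assoc, ← hπ₂, List.reverse_append]
    rfl

/-- Characterization of F_γ: a Dyck word d of length 2n (n ≥ 1) satisfies
    d·b ∈ F_γ iff d is symmetric and d·b is uniquely decomposable into two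
    palindromes. -/
theorem fgamma_characterization (n : ℕ) (hn : 1 ≤ n) (d : Word)
    (hd : IsDyck d) (hdl : d.length = 2 * n) :
    InFgamma (d ++ [Letter.b]) ↔
      (sym d = d ∧
        ∃! π : Word × Word, Palindrome π.1 ∧ Palindrome π.2 ∧
          d ++ [Letter.b] = π.1 ++ π.2) := by
  have hne : d ≠ [] := by rintro rfl; simp at hdl; omega
  have hnp := hd.not_palindrome_append_b hne
  constructor
  · rintro ⟨-, -, -, u, v, -, h₁, h₂⟩
    obtain ⟨hv, hu⟩ := palindrome_comp_of_eq ⟨n, by simp [hdl]⟩ h₁ h₂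
    refine ⟨sym_eq_self_of_palindrome h₁ h₂ hv hu, ⟨comp v, .b :: comp u⟩,
      ⟨hv, hu, by simpa using h₂⟩, ?_⟩
    rintro ⟨π₁, π₂⟩ ⟨hπ₁, hπ₂, h⟩
    obtain ⟨rfl, rfl⟩ := eq_comp_of_palindrome_of_eq hnp h₁ h₂ hπ₁ hπ₂ h
    rfl
  · rintro ⟨hsym, ⟨π₁, π₂⟩, ⟨hπ₁, hπ₂, h⟩, -⟩
    obtain ⟨u, v, h₁, h₂⟩ :=
      exists_eq_of_sym_eq_self hsym hπ₁ hπ₂ (ne_nil_of_not_palindrome_append (h ▸ hnp) hπ₁) h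
    exact ⟨n, hn, ⟨d, hd, hdl, rfl⟩, u, v, hd.isPrincipalPrefix h₁ h₂, h₁, h₂⟩
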